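/- arXiv:1809.08152 — 4 statements merged into one kernel-verified Lean document; each statement's English description precedes it below -/
import Mathlib

section
/- Let O be a complete discrete valuation ring with maximal ideal (π) and algebraically closed residue field k of characteristic p. Let σ be a ring automorphism of O fixing π and inducing a positive power of the Frobenius automorphism on k. Then for every m ≥ 1, the map GL_m(O) → GL_m(O) given by A ↦ A⁻¹ · σ(A) (where σ is applied entrywise) is surjective. -/
/-!
Writing `A ↦ A⁽q⁾` for the entrywise `q`-th power on `k`, one first solves the problem over `k`:
every invertible `B` is `A⁻¹ A⁽q⁾` for an invertible `A` (Lang's theorem), and consequently every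
additive equation `X⁽q⁾ = X B + D` is solvable (write `X = W A` and solve the Artin–Schreier
equations `w ^ q - w = a` entrywise). A solution `A` of `σ(A) ≡ A B (mod π^(s+1))` is then
corrected by `π^(s+1) Y`, with `Y` solving the additive equation modulo `π`; by completeness the
corrections converge to a solution of `σ(A) = A B`, invertible because it is so modulo `π`.

For Lang's theorem, the rows of `A` must form a basis of `k^m` of fixed vectors of the
`q`-semilinear bijection `ψ v = v⁽q⁾ B⁻¹`. A nonzero fixed vector always exists: in a cyclic
family `w, ψ w, …, ψ^r w` the fixed-point equations collapse to one polynomial equation in one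
unknown. Applied to the map induced by `ψ` on the quotient by the span `S` of the fixed vectors,
this shows that `S` is everything, because by Artin–Schreier a vector fixed modulo `S` differs by
an element of `S` from a fixed vector.
-/

open Polynomial Finset IsLocalRing

namespace IsAlgClosed

variable {k : Type*} [Field k] [IsAlgClosed k]

theorem exists_pow_sub_self_eq {q : ℕ} (hq : 1 < q) (a : k) : ∃ x : k, x ^ q - x = a := by
  have hdeg : (X ^ q - X - C a : k[X]).natDegree = q := by
    rw [natDegree_sub_C, FiniteField.X_pow_card_sub_X_natDegree_eq k hq]
  obtain ⟨x, hx⟩ := exists_root (X ^ q - X - C a : k[X])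
    (natDegree_pos_iff_degree_pos.mp (by omega)).ne'
  exact ⟨x, by simpa [sub_eq_zero] using hx⟩

theorem exists_ne_zero_eval_eq_self {P : k[X]} (hP : P ≠ 0) (hX : X ^ 2 ∣ P) :
    ∃ t ≠ 0, P.eval t = t := by
  obtain ⟨Q, rfl⟩ := hX
  have hQ : Q ≠ 0 := right_ne_zero_of_mul hP
  have hdeg : (X * Q - C 1).natDegree = Q.natDegree + 1 := by
    rw [natDegree_sub_C, natDegree_mul X_ne_zero hQ, natDegree_X, add_comm]
  obtain ⟨t, ht⟩ := exists_root (X * Q - C 1) (natDegree_pos_iff_degree_pos.mp (by omega)).ne'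
  have ht : t * Q.eval t = 1 := by simpa [sub_eq_zero] using ht
  exact ⟨t, left_ne_zero_of_mul_eq_one ht, by simp [pow_two, mul_assoc, ht]⟩

end IsAlgClosed

/-- The coefficients, as functions of `t`, of a fixed vector in a cyclic family: see
`LinearMap.apply_sum_cyclicFixedPoly_smul_eq_self`. -/
noncomputable def cyclicFixedPoly {k : Type*} [Field k] (q : ℕ) (c : ℕ → k) : ℕ → k[X]
  | 0 => C (c 0) * X ^ q
  | i + 1 => cyclicFixedPoly q c i ^ q + C (c (i + 1)) * X ^ q

namespace cyclicFixedPoly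

variable {k : Type*} [Field k] {q : ℕ} {c : ℕ → k}

theorem natDegree_eq (hq : 1 < q) (hc : c 0 ≠ 0) (i : ℕ) :
    (cyclicFixedPoly q c i).natDegree = q ^ (i + 1) := by
  induction i with
  | zero => simp [cyclicFixedPoly, natDegree_C_mul_X_pow q _ hc]
  | succ i ih =>
    have hlt : (C (c (i + 1)) * X ^ q).natDegree < (cyclicFixedPoly q c i ^ q).natDegree := by
      rw [natDegree_pow, ih, ← pow_succ']
      exact (natDegree_C_mul_X_pow_le _ _).trans_lt
        (lt_of_eq_of_lt (pow_one q).symm (Nat.pow_lt_pow_right hq (by omega)))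
    rw [cyclicFixedPoly, natDegree_add_eq_left_of_natDegree_lt hlt, natDegree_pow, ih,
      ← pow_succ']

theorem X_sq_dvd (hq : 1 < q) (i : ℕ) : X ^ 2 ∣ cyclicFixedPoly q c i := by
  induction i with
  | zero => exact (pow_dvd_pow X hq).mul_left _
  | succ i ih =>
    exact dvd_add (ih.trans (dvd_pow_self _ (by omega))) ((pow_dvd_pow X hq).mul_left _)

end cyclicFixedPoly

theorem exists_apply_succ_eq_sum_and_notMem_span {R V : Type*} [Ring R] [AddCommGroup V]
    [Module R V] [IsNoetherian R V] {F : ℕ → V} (h0 : F 0 ≠ 0) :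
    ∃ r, ∃ c : ℕ → R, F (r + 1) = ∑ i ∈ range (r + 1), c i • F i ∧
      F r ∉ Submodule.span R (F '' (range r : Set ℕ)) := by
  classical
  let W : ℕ →o Submodule R V :=
    ⟨fun j => Submodule.span R (F '' (range j : Set ℕ)), fun i j hij =>
      Submodule.span_mono (Set.image_mono (by simpa using hij))⟩
  have hex : ∃ j, F j ∈ W j := by
    obtain ⟨n, hn⟩ := monotone_stabilizes_iff_noetherian.mpr inferInstance W
    exact ⟨n, hn (n + 1) n.le_succ ▸ Submodule.subset_span ⟨n, by simp, rfl⟩⟩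
  have hfind : Nat.find hex ≠ 0 := fun h => h0 <| by
    have := Nat.find_spec hex
    rw [h] at this
    simpa [W] using this
  obtain ⟨r, hr⟩ := Nat.exists_eq_succ_of_ne_zero hfind
  obtain ⟨c, hc⟩ := (Submodule.mem_span_image_finset_iff_exists_fun' R).mp (hr ▸ Nat.find_spec hex)
  exact ⟨r, c, hc.symm, Nat.find_min hex (by omega)⟩

namespace LinearMap

variable {k V : Type*} [Field k] [AddCommGroup V] [Module k V] {φ : k →+* k} {q : ℕ}

theorem apply_sum_cyclicFixedPoly_smul_eq_self (hφ : ∀ a, φ a = a ^ q) (ψ : V →ₛₗ[φ] V)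
    {F : ℕ → V} (hF : ∀ i, F (i + 1) = ψ (F i)) {r : ℕ} {c : ℕ → k}
    (hc : F (r + 1) = ∑ i ∈ Finset.range (r + 1), c i • F i) {t : k}
    (ht : (cyclicFixedPoly q c r).eval t = t) :
    ψ (∑ i ∈ Finset.range (r + 1), (cyclicFixedPoly q c i).eval t • F i) =
      ∑ i ∈ Finset.range (r + 1), (cyclicFixedPoly q c i).eval t • F i := by
  set e : ℕ → k := fun i => (cyclicFixedPoly q c i).eval t
  have he0 : e 0 = c 0 * t ^ q := by simp [e, cyclicFixedPoly]
  have he (i : ℕ) : e (i + 1) = e i ^ q + c (i + 1) * t ^ q := by simp [e, cyclicFixedPoly]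
  calc ψ (∑ i ∈ Finset.range (r + 1), e i • F i)
        = ∑ i ∈ Finset.range (r + 1), e i ^ q • F (i + 1) := by
        simp [map_sum, hφ, hF]
    _ = ∑ i ∈ Finset.range r, e i ^ q • F (i + 1) +
          ∑ i ∈ Finset.range (r + 1), (c i * t ^ q) • F i := by
        rw [sum_range_succ, show e r = t from ht, hc, smul_sum]
        simp_rw [smul_smul, mul_comm (t ^ q)]
    _ = ∑ i ∈ Finset.range r, e (i + 1) • F (i + 1) + e 0 • F 0 := by
        rw [sum_range_succ', ← add_assoc, ← sum_add_distrib, he0]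
        simp_rw [he, add_smul]
    _ = ∑ i ∈ Finset.range (r + 1), e i • F i := (sum_range_succ' (fun i => e i • F i) r).symm

theorem exists_ne_zero_apply_eq_self [IsAlgClosed k] [FiniteDimensional k V] [Nontrivial V]
    (hφ : ∀ a, φ a = a ^ q) (hq : 1 < q) (ψ : V →ₛₗ[φ] V) (hψ : Function.Injective ψ) :
    ∃ v ≠ 0, ψ v = v := by
  obtain ⟨w, hw⟩ := exists_ne (0 : V)
  set F : ℕ → V := fun i => ψ^[i] w
  have hF (i : ℕ) : F (i + 1) = ψ (F i) := Function.iterate_succ_apply' ψ i w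
  obtain ⟨r, c, hc, hr⟩ := exists_apply_succ_eq_sum_and_notMem_span (R := k) (F := F) hw
  have mem_span (a : ℕ → k) :
      ∑ i ∈ Finset.range r, a i • F i ∈ Submodule.span k (F '' (Finset.range r : Set ℕ)) :=
    Submodule.sum_mem _ fun i hi => Submodule.smul_mem _ _ (Submodule.subset_span ⟨i, hi, rfl⟩)
  have hc0 : c 0 ≠ 0 := by
    intro h0
    choose d hd using fun i => IsAlgClosed.exists_pow_nat_eq (c (i + 1)) (by omega : 0 < q)
    have : ψ (F r) = ψ (∑ i ∈ Finset.range r, d i • F i) := by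
      rw [← hF, hc, sum_range_succ', h0, zero_smul, add_zero, map_sum]
      exact sum_congr rfl fun i _ => by rw [map_smulₛₗ, hφ, hd, hF]
    exact hr (hψ this ▸ mem_span d)
  have hpoly : cyclicFixedPoly q c r ≠ 0 := by
    apply ne_zero_of_natDegree_gt (n := 0)
    rw [cyclicFixedPoly.natDegree_eq hq hc0]
    positivity
  obtain ⟨t, ht0, ht⟩ :=
    IsAlgClosed.exists_ne_zero_eval_eq_self hpoly (cyclicFixedPoly.X_sq_dvd hq r)
  set e : ℕ → k := fun i => (cyclicFixedPoly q c i).eval t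
  have her : e r = t := ht
  refine ⟨∑ i ∈ Finset.range (r + 1), e i • F i, fun h => hr ?_,
    apply_sum_cyclicFixedPoly_smul_eq_self hφ ψ hF hc ht⟩
  rw [sum_range_succ, her, add_eq_zero_iff_neg_eq'] at h
  have : F r = ∑ i ∈ Finset.range r, (-t⁻¹ * e i) • F i := by
    simp_rw [mul_smul, ← smul_sum, neg_smul, ← smul_neg]
    rw [← h, neg_neg, smul_smul, inv_mul_cancel₀ ht0, one_smul]
  exact this ▸ mem_span _

theorem exists_mem_span_apply_sub_smul_eq (ψ : V →ₛₗ[φ] V) {c : k}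
    (hc : ∀ a, ∃ b, φ b - c * b = a) {y : V} (hy : y ∈ Submodule.span k {v | ψ v = v}) :
    ∃ x ∈ Submodule.span k {v | ψ v = v}, ψ x - c • x = y := by
  induction hy using Submodule.closure_induction with
  | zero => exact ⟨0, zero_mem _, by simp⟩
  | add y z _ _ hy hz =>
    obtain ⟨x, hx, rfl⟩ := hy
    obtain ⟨x', hx', rfl⟩ := hz
    exact ⟨x + x', add_mem hx hx', by rw [map_add, smul_add]; abel⟩
  | smul_mem a v hv =>
    obtain ⟨b, rfl⟩ := hc a
    refine ⟨b • v, Submodule.smul_mem _ _ (Submodule.subset_span hv), ?_⟩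
    rw [map_smulₛₗ, hv, smul_smul, ← sub_smul]

theorem span_setOf_apply_eq_self_eq_top [IsAlgClosed k] [FiniteDimensional k V]
    (hφ : ∀ a, φ a = a ^ q) (hq : 1 < q) (ψ : V →ₛₗ[φ] V) (hψ : Function.Injective ψ) :
    Submodule.span k {v | ψ v = v} = ⊤ := by
  set S := Submodule.span k {v | ψ v = v}
  have hmem_of_apply_mem (x : V) (hx : ψ x ∈ S) : x ∈ S := by
    obtain ⟨x', hx', h⟩ := ψ.exists_mem_span_apply_sub_smul_eq (c := 0)
      (fun a => by simpa [hφ] using IsAlgClosed.exists_pow_nat_eq a (by omega : 0 < q)) hx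
    rw [zero_smul, sub_zero] at h
    exact hψ h ▸ hx'
  by_contra hS
  have := Submodule.Quotient.nontrivial_iff.2 hS
  let ψS : V ⧸ S →ₛₗ[φ] V ⧸ S :=
    S.mapQ S ψ <| Submodule.span_le.2 fun v (hv : ψ v = v) =>
      show ψ v ∈ S from hv.symm ▸ Submodule.subset_span hv
  have hψS : Function.Injective ψS := by
    refine (injective_iff_map_eq_zero ψS).2 fun x hx => ?_
    induction x using Submodule.Quotient.induction_on with
    | _ x => exact (Submodule.Quotient.mk_eq_zero S).2 (hmem_of_apply_mem x
        ((Submodule.Quotient.mk_eq_zero S (x := ψ x)).1 hx))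
  obtain ⟨u, hu0, hu⟩ := ψS.exists_ne_zero_apply_eq_self hφ hq hψS
  induction u using Submodule.Quotient.induction_on with
  | _ u =>
  obtain ⟨x, hx, hxu⟩ := ψ.exists_mem_span_apply_sub_smul_eq (c := 1)
    (fun a => by simpa [hφ] using IsAlgClosed.exists_pow_sub_self_eq hq a)
    ((Submodule.Quotient.eq S).1 hu)
  rw [one_smul] at hxu
  have hux : u - x ∈ S := Submodule.subset_span <| show ψ (u - x) = u - x by
    rw [map_sub, sub_eq_sub_iff_sub_eq_sub, hxu]
  exact hu0 ((Submodule.Quotient.mk_eq_zero S).2 (by simpa using add_mem hux hx))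

end LinearMap

namespace Matrix

variable {k ι : Type*} [Field k] [IsAlgClosed k] [Fintype ι] [DecidableEq ι] {φ : k →+* k}
  {q : ℕ}

theorem exists_isUnit_map_eq_mul (hφ : ∀ a, φ a = a ^ q) (hq : 1 < q) {B : Matrix ι ι k}
    (hB : IsUnit B) : ∃ A : Matrix ι ι k, IsUnit A ∧ A.map φ = A * B := by
  obtain ⟨U, rfl⟩ := hB
  let ψ : (ι → k) →ₛₗ[φ] (ι → k) :=
    { toFun v := (φ ∘ v) ᵥ* ↑(U⁻¹)
      map_add' u v := by
        rw [← add_vecMul]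
        congr 1
        ext
        simp
      map_smul' a v := by
        rw [← smul_vecMul]
        congr 1
        ext
        simp }
  have hψ : Function.Injective ψ :=
    (vecMul_injective_iff_isUnit.2 U⁻¹.isUnit).comp fun u v h =>
      funext fun i => φ.injective (congrFun h i)
  have hfix (v : ι → k) (hv : ψ v = v) : φ ∘ v = v ᵥ* U := by
    simpa [ψ, vecMul_vecMul] using congrArg (· ᵥ* (U : Matrix ι ι k)) hv
  have hspan := (ψ.span_setOf_apply_eq_self_eq_top hφ hq hψ).ge
  obtain ⟨b, hb⟩ : ∃ b : Module.Basis ι k (ι → k), ∀ i, ψ (b i) = b i := by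
    let b := Module.Basis.ofSpan hspan
    refine ⟨b.reindex (b.indexEquiv (Pi.basisFun k ι)), fun i => ?_⟩
    rw [Module.Basis.reindex_apply]
    exact Module.Basis.ofSpan_subset hspan ⟨_, rfl⟩
  refine ⟨of b, linearIndependent_rows_iff_isUnit.1 b.linearIndependent, ?_⟩
  ext i j
  exact congrFun (hfix (b i) (hb i)) j

theorem exists_map_eq_mul_add (hφ : ∀ a, φ a = a ^ q) (hq : 1 < q) {B : Matrix ι ι k}
    (hB : IsUnit B) (D : Matrix ι ι k) : ∃ X : Matrix ι ι k, X.map φ = X * B + D := by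
  obtain ⟨V, hV, hVB⟩ := exists_isUnit_map_eq_mul hφ hq hB
  have hVB_det : IsUnit (V * B).det := (isUnit_iff_isUnit_det _).1 (hV.mul hB)
  choose W hW using fun i j => IsAlgClosed.exists_pow_sub_self_eq hq ((D * (V * B)⁻¹) i j)
  have hWφ : (of W).map φ = of W + D * (V * B)⁻¹ := by
    ext i j
    simp [hφ, ← hW i j]
  refine ⟨of W * V, ?_⟩
  rw [← φ.mapMatrix_apply, map_mul, φ.mapMatrix_apply, φ.mapMatrix_apply, hWφ, hVB, add_mul,
    ← mul_assoc, nonsing_inv_mul_cancel_right _ _ hVB_det]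

end Matrix

theorem Submodule.mem_smul_top_pi_iff {R ι : Type*} [CommRing R] [Finite ι] {M : ι → Type*}
    [∀ i, AddCommGroup (M i)] [∀ i, Module R (M i)] (I : Ideal R) {x : ∀ i, M i} :
    x ∈ I • (⊤ : Submodule R (∀ i, M i)) ↔ ∀ i, x i ∈ I • (⊤ : Submodule R (M i)) := by
  classical
  have := Fintype.ofFinite ι
  refine ⟨fun hx i => smul_top_le_comap_smul_top I (LinearMap.proj i) hx, fun hx => ?_⟩
  rw [← Finset.univ_sum_single x]
  exact sum_mem fun i _ => smul_top_le_comap_smul_top I (LinearMap.single R M i) (hx i)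

instance IsPrecomplete.pi {R ι : Type*} [CommRing R] {I : Ideal R} [Finite ι] {M : ι → Type*}
    [∀ i, AddCommGroup (M i)] [∀ i, Module R (M i)] [∀ i, IsPrecomplete I (M i)] :
    IsPrecomplete I (∀ i, M i) := by
  refine ⟨fun f hf => ?_⟩
  simp only [SModEq.sub_mem, Submodule.mem_smul_top_pi_iff] at hf ⊢
  choose L hL using fun i => IsPrecomplete.prec inferInstance (f := fun n => f n i)
    fun hmn => SModEq.sub_mem.2 (hf hmn i)
  exact ⟨L, fun n i => SModEq.sub_mem.1 (hL i n)⟩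

instance Matrix.isPrecomplete {R m n : Type*} [CommRing R] {I : Ideal R} [Finite m] [Finite n]
    [IsPrecomplete I R] : IsPrecomplete I (Matrix m n R) :=
  inferInstanceAs (IsPrecomplete I (m → n → R))

theorem IsPrecomplete.exists_smodEq_of_smodEq_succ {R M : Type*} [CommRing R] {I : Ideal R}
    [AddCommGroup M] [Module R M] [IsPrecomplete I M] {f : ℕ → M}
    (hf : ∀ n, f n ≡ f (n + 1) [SMOD (I ^ n • ⊤ : Submodule R M)]) :
    ∃ L, ∀ n, f n ≡ L [SMOD (I ^ n • ⊤ : Submodule R M)] := by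
  refine IsPrecomplete.prec inferInstance fun {m n} hmn => ?_
  induction n, hmn using Nat.le_induction with
  | base => rfl
  | succ n hmn ih => exact ih.trans ((hf n).mono (Submodule.pow_smul_top_le I M hmn))

theorem Function.Surjective.matrix_map {α β m n : Type*} {f : α → β} (hf : Surjective f) :
    Surjective fun A : Matrix m n α => A.map f := fun B => by
  choose g hg using fun i j => hf (B i j)
  exact ⟨Matrix.of g, by ext; simp [hg]⟩

theorem Matrix.map_add_pow_smul_sub_mul {R n : Type*} [CommRing R] [Fintype n] {σ : R ≃+* R}
    {π : R} (hσπ : σ π = π) (A Y B : Matrix n n R) (s : ℕ) :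
    (A + π ^ s • Y).map σ - (A + π ^ s • Y) * B =
      A.map σ - A * B + π ^ s • (Y.map σ - Y * B) := by
  rw [Matrix.map_add σ (map_add σ), map_smul' _ _ _ (map_mul σ), map_pow, hσπ, add_mul,
    smul_mul_assoc, smul_sub]
  abel

theorem IsLocalRing.ResidueField.map_eq_pow {R : Type*} [CommRing R] [IsLocalRing R]
    {σ : R ≃+* R} {q : ℕ} (hσ : ∀ x, residue R (σ x) = residue R x ^ q) (y : ResidueField R) :
    ResidueField.map (σ : R →+* R) y = y ^ q := by
  obtain ⟨x, rfl⟩ := residue_surjective y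
  exact hσ x

namespace Matrix

variable {R : Type*} [CommRing R] [IsLocalRing R]

theorem map_map_residue {m n : Type*} (σ : R ≃+* R) (A : Matrix m n R) :
    (A.map σ).map (residue R) = (A.map (residue R)).map (ResidueField.map (σ : R →+* R)) :=
  rfl

theorem isUnit_of_isUnit_map_residue {n : Type*} [Fintype n] [DecidableEq n] {A : Matrix n n R}
    (h : IsUnit (A.map (residue R))) : IsUnit A := by
  rw [isUnit_iff_isUnit_det] at h ⊢
  rwa [← RingHom.mapMatrix_apply, ← RingHom.map_det, isUnit_map_iff] at h

end Matrix

namespace Irreducible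

variable {O : Type*} [CommRing O] [IsDomain O] [IsDiscreteValuationRing O] {π : O}

theorem smodEq_pow_maximalIdeal_iff (hπ : Irreducible π) {N : Type*} [AddCommGroup N]
    [Module O N] {x y : N} {s : ℕ} :
    x ≡ y [SMOD (maximalIdeal O ^ s • ⊤ : Submodule O N)] ↔ ∃ z, x - y = π ^ s • z := by
  rw [SModEq.sub_mem, hπ.maximalIdeal_eq, Ideal.span_singleton_pow,
    Submodule.ideal_span_singleton_smul, Submodule.mem_smul_pointwise_iff_exists]
  simp [eq_comm]

theorem map_residue_eq_zero_iff (hπ : Irreducible π) {m n : Type*} {A : Matrix m n O} :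
    A.map (residue O) = 0 ↔ ∃ E, A = π • E := by
  have hdvd (x : O) : residue O x = 0 ↔ π ∣ x := by
    rw [residue_eq_zero_iff, hπ.maximalIdeal_eq, Ideal.mem_span_singleton]
  constructor
  · intro hA
    choose E hE using fun i j => (hdvd (A i j)).1 (congrFun (congrFun hA i) j)
    exact ⟨Matrix.of E, by ext i j; simp [hE]⟩
  · rintro ⟨E, rfl⟩
    ext i j
    simpa using (hdvd _).2 (dvd_mul_right π (E i j))

end Irreducible

namespace Matrix

variable {O ι : Type*} [CommRing O] [IsDomain O] [IsDiscreteValuationRing O]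
  [IsAlgClosed (ResidueField O)] [Fintype ι] [DecidableEq ι] {π : O} {σ : O ≃+* O} {q : ℕ}

theorem exists_isUnit_map_residue_and_map_sub_mul_eq_smul (hπ : Irreducible π) (hq : 1 < q)
    (hσ : ∀ x, residue O (σ x) = residue O x ^ q) {B : Matrix ι ι O} (hB : IsUnit B) :
    ∃ A : Matrix ι ι O, IsUnit (A.map (residue O)) ∧ ∃ E, A.map σ - A * B = π • E := by
  obtain ⟨A', hA', hA'B⟩ := exists_isUnit_map_eq_mul (ResidueField.map_eq_pow hσ) hq
    (hB.map (residue O).mapMatrix)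
  obtain ⟨A, rfl⟩ := residue_surjective.matrix_map A'
  refine ⟨A, hA', hπ.map_residue_eq_zero_iff.1 ?_⟩
  rw [← RingHom.mapMatrix_apply, map_sub, map_mul, RingHom.mapMatrix_apply,
    RingHom.mapMatrix_apply, map_map_residue, sub_eq_zero]
  exact hA'B

theorem exists_add_map_sub_mul_eq_smul (hπ : Irreducible π) (hq : 1 < q)
    (hσ : ∀ x, residue O (σ x) = residue O x ^ q) {B : Matrix ι ι O} (hB : IsUnit B)
    (E : Matrix ι ι O) : ∃ Y F : Matrix ι ι O, E + (Y.map σ - Y * B) = π • F := by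
  obtain ⟨Y', hY'⟩ := exists_map_eq_mul_add (ResidueField.map_eq_pow hσ) hq
    (hB.map (residue O).mapMatrix) (-E.map (residue O))
  obtain ⟨Y, rfl⟩ := residue_surjective.matrix_map Y'
  refine ⟨Y, hπ.map_residue_eq_zero_iff.1 ?_⟩
  simp only [← RingHom.mapMatrix_apply, map_add, map_sub, map_mul] at hY' ⊢
  simp only [RingHom.mapMatrix_apply, map_map_residue] at hY' ⊢
  rw [hY']
  abel

theorem exists_seq_map_sub_mul_eq_pow_smul (hπ : Irreducible π) (hσπ : σ π = π) (hq : 1 < q)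
    (hσ : ∀ x, residue O (σ x) = residue O x ^ q) {B : Matrix ι ι O} (hB : IsUnit B) :
    ∃ A E : ℕ → Matrix ι ι O, IsUnit ((A 0).map (residue O)) ∧
      (∀ s, ∃ Y, A (s + 1) = A s + π ^ (s + 1) • Y) ∧
      ∀ s, (A s).map σ - A s * B = π ^ (s + 1) • E s := by
  obtain ⟨A₀, hA₀, E₀, hE₀⟩ := exists_isUnit_map_residue_and_map_sub_mul_eq_smul hπ hq hσ hB
  choose Y F hYF using exists_add_map_sub_mul_eq_smul hπ hq hσ hB
  obtain ⟨seq, hseq_zero, hseq_succ⟩ : ∃ seq : ℕ → Matrix ι ι O × Matrix ι ι O,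
      seq 0 = (A₀, E₀) ∧
        ∀ s, seq (s + 1) = ((seq s).1 + π ^ (s + 1) • Y (seq s).2, F (seq s).2) :=
    ⟨fun s => Nat.rec (A₀, E₀) (fun s AE => (AE.1 + π ^ (s + 1) • Y AE.2, F AE.2)) s, rfl,
      fun _ => rfl⟩
  refine ⟨fun s => (seq s).1, fun s => (seq s).2, by simpa [hseq_zero] using hA₀,
    fun s => ⟨Y (seq s).2, by simp only [hseq_succ]⟩, fun s => ?_⟩
  dsimp only
  induction s with
  | zero => rw [hseq_zero, zero_add, pow_one, hE₀]
  | succ s ih =>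
    rw [hseq_succ, map_add_pow_smul_sub_mul hσπ, ih, ← smul_add, hYF, pow_succ _ (s + 1),
      mul_smul]

theorem exists_isUnit_map_eq_mul_of_isAdicComplete [IsAdicComplete (maximalIdeal O) O]
    (hπ : Irreducible π) (hσπ : σ π = π) (hq : 1 < q)
    (hσ : ∀ x, residue O (σ x) = residue O x ^ q) {B : Matrix ι ι O} (hB : IsUnit B) :
    ∃ A : Matrix ι ι O, IsUnit A ∧ A.map σ = A * B := by
  obtain ⟨A, E, hA₀, hA_succ, hAE⟩ := exists_seq_map_sub_mul_eq_pow_smul hπ hσπ hq hσ hB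
  choose Y hY using hA_succ
  have hcauchy (s : ℕ) :
      A s ≡ A (s + 1) [SMOD (maximalIdeal O ^ s • ⊤ : Submodule O (Matrix ι ι O))] :=
    hπ.smodEq_pow_maximalIdeal_iff.2
      ⟨-(π • Y s), by rw [hY, sub_add_cancel_left, pow_succ, mul_smul, smul_neg]⟩
  obtain ⟨L, hL⟩ := IsPrecomplete.exists_smodEq_of_smodEq_succ hcauchy
  choose Z hZ using fun s => hπ.smodEq_pow_maximalIdeal_iff.1 (hL s)
  have hL_eq (s : ℕ) : L = A s + π ^ s • -Z s := by
    rw [smul_neg, ← hZ, neg_sub, add_sub_cancel]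
  refine ⟨L, isUnit_of_isUnit_map_residue ?_, ?_⟩
  · have hLA₀ : L - A 0 = π • (Y 0 - Z 1) := by
      rw [hL_eq 1, hY, zero_add, pow_one, smul_sub, smul_neg]
      abel
    have h := hπ.map_residue_eq_zero_iff.2 ⟨_, hLA₀⟩
    rw [← RingHom.mapMatrix_apply, map_sub, sub_eq_zero] at h
    rwa [← RingHom.mapMatrix_apply, h]
  · rw [← sub_eq_zero]
    refine IsHausdorff.haus' (I := maximalIdeal O) _ fun s =>
      hπ.smodEq_pow_maximalIdeal_iff.2 ⟨π • E s + ((-Z s).map σ - -Z s * B), ?_⟩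
    rw [sub_zero, hL_eq s, map_add_pow_smul_sub_mul hσπ, hAE, pow_succ, mul_smul, smul_add]

end Matrix

theorem stmt_1_general (p : ℕ) [Fact p.Prime]
    (O : Type*) [CommRing O] [IsDomain O] [IsDiscreteValuationRing O]
    [IsAdicComplete (maximalIdeal O) O]
    [IsAlgClosed (ResidueField O)]
    (π : O) (hπ : Irreducible π)
    (σ : O ≃+* O) (hσπ : σ π = π)
    (n : ℕ) (hn : 1 ≤ n) (q : ℕ) (hq : q = p ^ n)
    (hσres : ∀ x : O, residue O (σ x) = residue O x ^ q)
    (m : ℕ) :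
    Function.Surjective
      (fun A : GL (Fin m) O =>
        A⁻¹ * Units.map (σ.toRingHom.mapMatrix : Matrix (Fin m) (Fin m) O →+* _).toMonoidHom A) := by
  intro B
  have hq1 : 1 < q := hq ▸ Nat.one_lt_pow (by omega) (Fact.out : p.Prime).one_lt
  obtain ⟨A, hA, hAB⟩ :=
    Matrix.exists_isUnit_map_eq_mul_of_isAdicComplete hπ hσπ hq1 hσres B.isUnit
  refine ⟨hA.unit, Units.ext ?_⟩
  change ((hA.unit⁻¹ : (Matrix (Fin m) (Fin m) O)ˣ) : Matrix (Fin m) (Fin m) O) * A.map σ = B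
  rw [hAB, ← mul_assoc, hA.val_inv_mul, one_mul]

theorem stmt_1 (p : ℕ) [Fact p.Prime]
    (O : Type*) [CommRing O] [IsDomain O] [IsDiscreteValuationRing O]
    [IsAdicComplete (maximalIdeal O) O]
    [IsAlgClosed (ResidueField O)] [CharP (ResidueField O) p]
    (π : O) (hπ : Irreducible π)
    (σ : O ≃+* O) (hσπ : σ π = π)
    (n : ℕ) (hn : 1 ≤ n) (q : ℕ) (hq : q = p ^ n)
    (hσres : ∀ x : O, residue O (σ x) = residue O x ^ q)
    (m : ℕ) :
    Function.Surjective
      (fun A : GL (Fin m) O =>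
        A⁻¹ * Units.map (σ.toRingHom.mapMatrix : Matrix (Fin m) (Fin m) O →+* _).toMonoidHom A) :=
  stmt_1_general p O π hπ σ hσπ n hn q hq hσres m
end

section
/- Let O be a complete discrete valuation ring with uniformizer π, algebraically closed residue field k of characteristic p, and let σ be a ring automorphism of O fixing π and inducing a positive power of Frobenius on k. If A ∈ GL_m(O) and C ∈ GL_m(O) satisfy A - C⁻¹σ(C) ∈ π^n · M_m(O) for some n ≥ 1, then there exists C' ∈ GL_m(O) with C - C' ∈ π^n · M_m(O) and A - C'⁻¹σ(C') ∈ π^{n+1} · M_m(O). -/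
open IsLocalRing

/-!
Write `A = C⁻¹ σ(C) + πⁿ X` and look for `C' = (1 + πⁿ Y) C`. Since `2n ≥ n + 1`, modulo `πⁿ⁺¹`
one has `C'⁻¹ σ(C') ≡ C⁻¹ σ(C) + πⁿ C⁻¹ (σ(Y) - Y) σ(C)`, so it suffices that
`σ(Y) - Y ≡ C X σ(C)⁻¹ (mod π)`. Entrywise this is the Artin–Schreier equation `tᑫ - t = c`
in the residue field, solvable because the residue field is algebraically closed and `q ≥ 2`.
-/

open Polynomial in
theorem IsAlgClosed.exists_pow_sub_self_eq_s2 {k : Type*} [Field k] [IsAlgClosed k] {q : ℕ}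
    (hq : 2 ≤ q) (c : k) : ∃ t : k, t ^ q - t = c := by
  have hdeg : (X ^ q - X - C c : k[X]).natDegree = q := by
    rw [natDegree_sub_C, FiniteField.X_pow_card_sub_X_natDegree_eq k (by omega)]
  obtain ⟨t, ht⟩ := IsAlgClosed.exists_root (X ^ q - X - C c : k[X])
    (degree_ne_of_natDegree_ne (n := 0) (by omega))
  exact ⟨t, by simpa [sub_eq_zero] using ht⟩

theorem IsLocalRing.exists_map_sub_self_sub_mem_maximalIdeal {R : Type*} [CommRing R]
    [IsLocalRing R] [IsAlgClosed (ResidueField R)] (σ : R →+* R) {q : ℕ} (hq : 2 ≤ q)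
    (hσ : ∀ x, residue R (σ x) = residue R x ^ q) (z : R) :
    ∃ y, σ y - y - z ∈ maximalIdeal R := by
  obtain ⟨t, ht⟩ := IsAlgClosed.exists_pow_sub_self_eq_s2 hq (residue R z)
  obtain ⟨y, rfl⟩ := residue_surjective t
  exact ⟨y, (residue_eq_zero_iff _).mp (by rw [map_sub, map_sub, hσ, ht, sub_self])⟩

theorem Matrix.isUnit_one_add_of_forall_mem_maximalIdeal {ι R : Type*} [Fintype ι]
    [DecidableEq ι] [CommRing R] [IsLocalRing R] {M : Matrix ι ι R}
    (hM : ∀ i j, M i j ∈ maximalIdeal R) : IsUnit (1 + M) := by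
  have hres : (1 + M).map (residue R) = 1 := by
    ext i j
    simp [Matrix.one_apply, (residue_eq_zero_iff _).mpr (hM i j), apply_ite]
  rw [Matrix.isUnit_iff_isUnit_det, ← residue_ne_zero_iff_isUnit, RingHom.map_det,
    RingHom.mapMatrix_apply, hres, Matrix.det_one]
  exact one_ne_zero

theorem Matrix.forall_mem_span_singleton_iff_exists_eq_smul {ι κ R : Type*} [CommRing R]
    {a : R} {M : Matrix ι κ R} : (∀ i j, M i j ∈ Ideal.span {a}) ↔ ∃ X, M = a • X := by
  simp only [Ideal.mem_span_singleton]
  constructor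
  · intro h
    choose X hX using h
    exact ⟨Matrix.of X, by ext i j; exact hX i j⟩
  · rintro ⟨X, rfl⟩ i j
    exact Dvd.intro _ rfl

theorem sub_inv_mul_map_eq {S : Type*} [Ring S] (τ : S →+* S) (a : S) (c u : Sˣ) :
    a - ↑(u * c)⁻¹ * τ ↑(u * c) =
      ↑c⁻¹ * ↑u⁻¹ * (↑u * (↑c * a * τ ↑c⁻¹) - τ ↑u) * τ ↑c := by
  simp only [mul_inv_rev, Units.val_mul, map_mul, mul_sub, sub_mul, mul_assoc,
    Units.inv_mul_cancel_left, ← map_mul τ (↑c⁻¹ : S), Units.inv_mul, map_one, mul_one]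

theorem Matrix.exists_sub_inv_mul_map_eq_pow_succ_smul {ι R : Type*} [Fintype ι] [DecidableEq ι]
    [CommRing R] (σ : R →+* R) {π : R} (hσπ : σ π = π) {n : ℕ} (hn : 1 ≤ n)
    {A X Y W : Matrix ι ι R} {c u : GL ι R}
    (hA : A = (↑c⁻¹ : Matrix ι ι R) * (c : Matrix ι ι R).map σ + π ^ n • X)
    (hY : Y.map σ = Y + (c : Matrix ι ι R) * X * (↑c⁻¹ : Matrix ι ι R).map σ + π • W)
    (hu : (u : Matrix ι ι R) = 1 + π ^ n • Y) :
    ∃ V, A - (↑(u * c)⁻¹ : Matrix ι ι R) * (↑(u * c) : Matrix ι ι R).map σ =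
      π ^ (n + 1) • V := by
  obtain ⟨k, rfl⟩ : ∃ k, n = k + 1 := ⟨n - 1, by omega⟩
  simp only [← RingHom.mapMatrix_apply] at hA hY ⊢
  set τ := σ.mapMatrix (m := ι)
  set Z := (c : Matrix ι ι R) * X * τ ↑c⁻¹
  have hcA : (c : Matrix ι ι R) * A * τ ↑c⁻¹ = 1 + π ^ (k + 1) • Z := by
    rw [hA, mul_add, add_mul, Units.mul_inv_cancel_left, ← map_mul, Units.mul_inv, map_one,
      mul_smul_comm, smul_mul_assoc]
  have hτu : τ u = u + π ^ (k + 1) • Z + π ^ (k + 2) • W := by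
    have hτ : τ (π ^ (k + 1) • Y) = π ^ (k + 1) • τ Y := by
      ext i j
      simp [τ, hσπ]
    rw [hu, map_add, map_one, hτ, hY]
    module
  have hdefect : (u : Matrix ι ι R) * (1 + π ^ (k + 1) • Z) - τ u =
      π ^ (k + 2) • (π ^ k • (Y * Z) - W) := by
    rw [hτu, hu, add_mul, one_mul, mul_add, mul_one, smul_mul_smul_comm, ← pow_add]
    module
  refine ⟨(↑c⁻¹ : Matrix ι ι R) * (↑u⁻¹ : Matrix ι ι R) * (π ^ k • (Y * Z) - W) * τ ↑c, ?_⟩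
  rw [sub_inv_mul_map_eq τ A c u, hcA, hdefect, mul_smul_comm, smul_mul_assoc]

theorem Matrix.exists_map_eq_add_add_smul {ι R : Type*} [CommRing R] [IsLocalRing R]
    [IsAlgClosed (ResidueField R)] (σ : R →+* R) {q : ℕ} (hq : 2 ≤ q)
    (hσ : ∀ x, residue R (σ x) = residue R x ^ q) {π : R}
    (hπ : maximalIdeal R = Ideal.span {π}) (Z : Matrix ι ι R) :
    ∃ Y W : Matrix ι ι R, Y.map σ = Y + Z + π • W := by
  choose Y hY using fun i j ↦ exists_map_sub_self_sub_mem_maximalIdeal σ hq hσ (Z i j)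
  obtain ⟨W, hW⟩ :=
    (forall_mem_span_singleton_iff_exists_eq_smul (M := (of Y).map σ - of Y - Z)).mp (hπ ▸ hY)
  exact ⟨of Y, W, by rw [← hW]; abel⟩

theorem stmt_2_general (p : ℕ) [Fact p.Prime]
    (O : Type*) [CommRing O] [IsDomain O] [IsDiscreteValuationRing O]
    [IsAlgClosed (ResidueField O)]
    (π : O) (hπ : Irreducible π)
    (σ : O ≃+* O) (hσπ : σ π = π)
    (z : ℕ) (hz : 1 ≤ z) (q : ℕ) (hq : q = p ^ z)
    (hσres : ∀ x : O, residue O (σ x) = residue O x ^ q)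
    (m : ℕ) (A C : GL (Fin m) O) (n : ℕ) (hn : 1 ≤ n)
    (hAC : ∀ i j, ((A : Matrix (Fin m) (Fin m) O)
        - (↑C⁻¹ : Matrix (Fin m) (Fin m) O) * (C : Matrix (Fin m) (Fin m) O).map σ) i j
        ∈ Ideal.span {π} ^ n) :
    ∃ C' : GL (Fin m) O,
      (∀ i j, ((C : Matrix (Fin m) (Fin m) O) - (C' : Matrix (Fin m) (Fin m) O)) i j
          ∈ Ideal.span {π} ^ n) ∧
      (∀ i j, ((A : Matrix (Fin m) (Fin m) O)
          - (↑C'⁻¹ : Matrix (Fin m) (Fin m) O) * (C' : Matrix (Fin m) (Fin m) O).map σ) i j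
          ∈ Ideal.span {π} ^ (n + 1)) := by
  simp only [Ideal.span_singleton_pow, Matrix.forall_mem_span_singleton_iff_exists_eq_smul]
    at hAC ⊢
  have hq2 : 2 ≤ q := hq ▸ (Fact.out : p.Prime).two_le.trans (Nat.le_self_pow (by omega) p)
  have hmax : maximalIdeal O = Ideal.span {π} := hπ.maximalIdeal_eq
  obtain ⟨X, hX⟩ := hAC
  obtain ⟨Y, W, hY⟩ := Matrix.exists_map_eq_add_add_smul (σ : O →+* O) hq2 hσres hmax
    ((C : Matrix (Fin m) (Fin m) O) * X * (↑C⁻¹ : Matrix (Fin m) (Fin m) O).map σ)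
  have hU : IsUnit (1 + π ^ n • Y) := Matrix.isUnit_one_add_of_forall_mem_maximalIdeal
    fun i j ↦ hmax ▸ Ideal.mem_span_singleton.mpr ((dvd_pow_self π (by omega)).mul_right _)
  refine ⟨hU.unit * C, ⟨-(Y * C), ?_⟩, ?_⟩
  · rw [Units.val_mul, IsUnit.unit_spec, add_mul, one_mul, smul_mul_assoc]
    module
  · exact Matrix.exists_sub_inv_mul_map_eq_pow_succ_smul (σ : O →+* O) hσπ hn
      (eq_add_of_sub_eq' hX) hY hU.unit_spec

theorem stmt_2 (p : ℕ) [Fact p.Prime]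
    (O : Type*) [CommRing O] [IsDomain O] [IsDiscreteValuationRing O]
    [IsAdicComplete (maximalIdeal O) O]
    [IsAlgClosed (ResidueField O)] [CharP (ResidueField O) p]
    (π : O) (hπ : Irreducible π)
    (σ : O ≃+* O) (hσπ : σ π = π)
    (z : ℕ) (hz : 1 ≤ z) (q : ℕ) (hq : q = p ^ z)
    (hσres : ∀ x : O, residue O (σ x) = residue O x ^ q)
    (m : ℕ) (A C : GL (Fin m) O) (n : ℕ) (hn : 1 ≤ n)
    (hAC : ∀ i j, ((A : Matrix (Fin m) (Fin m) O)
        - (↑C⁻¹ : Matrix (Fin m) (Fin m) O) * (C : Matrix (Fin m) (Fin m) O).map σ) i j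
        ∈ Ideal.span {π} ^ n) :
    ∃ C' : GL (Fin m) O,
      (∀ i j, ((C : Matrix (Fin m) (Fin m) O) - (C' : Matrix (Fin m) (Fin m) O)) i j
          ∈ Ideal.span {π} ^ n) ∧
      (∀ i j, ((A : Matrix (Fin m) (Fin m) O)
          - (↑C'⁻¹ : Matrix (Fin m) (Fin m) O) * (C' : Matrix (Fin m) (Fin m) O).map σ) i j
          ∈ Ideal.span {π} ^ (n + 1)) :=
  stmt_2_general p O π hπ σ hσπ z hz q hq hσres m A C n hn hAC
end

section
/- Let O be a complete DVR with uniformizer π and algebraically closed residue field k of characteristic p, let σ be a ring automorphism of O fixing π and inducing a positive power of Frobenius on k, and let O₀ = O^⟨σ⟩. Let Λ be an O-algebra that is free of finite rank as an O-module. Denote by Λ^(σ) the O-algebra with the same ring structure as Λ but scalar action λ·a = σ⁻¹(λ)a. If Λ ≅ Λ^(σ) as O-algebras, then there exists an O₀-subalgebra Λ₀ ⊆ Λ which is free of finite rank over O₀ such that Λ ≅ O ⊗_{O₀} Λ₀ as O-algebras. -/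
/-!
Put `Ψ = Φ⁻¹`, a `σ`-semilinear ring automorphism of `Λ`; `Λ₀` is its fixed subalgebra. Modulo `π`,
`Ψ` induces an injective `q`-semilinear map `ψ` of `V = k ⊗[O] Λ`, and by Lang's lemma `V` has a
basis of `ψ`-fixed vectors: every cyclic subspace of `ψ` contains a nonzero fixed vector (a nonzero
root of a polynomial over `k = k̄` gives its coordinates), and `ψ - 1` maps the span `U` of the fixed
vectors onto `U` (Artin–Schreier), so fixed vectors of `V ⧸ U` lift to fixed vectors outside `U`.
Hence `Ψ - 1` is onto modulo `π`, so onto by `π`-adic approximation, and the fixed basis of `V` lifts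
to a `Ψ`-fixed `O`-basis of `Λ` (Nakayama). Coordinates of `Ψ`-fixed elements in this basis are
`σ`-fixed, so it is an `O₀`-basis of `Λ₀`, and `O ⊗[O₀] Λ₀ → Λ` maps a basis to a basis.
-/

open Polynomial Submodule IsLocalRing TensorProduct

attribute [local instance] RingHomInvPair.of_ringEquiv RingHomInvPair.of_ringEquiv_symm

section Lang

variable {k : Type*} [Field k]

lemma IsAlgClosed.exists_pow_sub_mul_eq [IsAlgClosed k] {q : ℕ} (hq : 1 < q) (a c : k) :
    ∃ d : k, d ^ q - a * d = c := by
  have hdeg : (X ^ q - C a * X - C c : k[X]).degree = q := by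
    rw [sub_sub, degree_sub_eq_left_of_degree_lt] <;> compute_degree!
  obtain ⟨d, hd⟩ := IsAlgClosed.exists_root (X ^ q - C a * X - C c : k[X])
    (by rw [hdeg]; exact_mod_cast (by omega : q ≠ 0))
  exact ⟨d, by simpa [sub_eq_zero] using hd⟩

/-- Given `φ^[m+1] v = ∑ i ≤ m, A i • φ^[i] v` for a `q`-semilinear `φ`, the vector
`∑ i ≤ m, γ i • φ^[i] v` with `γ i = (langPoly A q i).eval t` is `φ`-fixed whenever
`(langPoly A q m).eval t = t`: its coefficient equations are `γ 0 = A 0 * t ^ q` and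
`γ (i + 1) = γ i ^ q + A (i + 1) * t ^ q`, with `t = γ m`. -/
noncomputable def langPoly (A : ℕ → k) (q : ℕ) : ℕ → k[X]
  | 0 => C (A 0) * X ^ q
  | i + 1 => langPoly A q i ^ q + C (A (i + 1)) * X ^ q

variable {A : ℕ → k} {q : ℕ}

lemma X_pow_dvd_langPoly (hq : q ≠ 0) (i : ℕ) : X ^ q ∣ langPoly A q i := by
  induction i with
  | zero => exact dvd_mul_left _ _
  | succ i ih => exact dvd_add (ih.trans (dvd_pow_self _ hq)) (dvd_mul_left _ _)

lemma natDegree_langPoly (hA : A 0 ≠ 0) (hq : 1 < q) (i : ℕ) :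
    (langPoly A q i).natDegree = q ^ (i + 1) := by
  induction i with
  | zero => simp [langPoly, natDegree_C_mul_X_pow q (A 0) hA]
  | succ i ih =>
    have hpow : (langPoly A q i ^ q).natDegree = q ^ (i + 2) := by
      rw [natDegree_pow, ih, ← pow_succ']
    rw [langPoly, natDegree_add_eq_left_of_natDegree_lt, hpow]
    calc (C (A (i + 1)) * X ^ q).natDegree ≤ q := natDegree_C_mul_X_pow_le _ _
      _ < q ^ (i + 2) := by
        simpa using Nat.pow_lt_pow_right hq (show 1 < i + 2 by omega)
      _ = _ := hpow.symm

lemma exists_ne_zero_eval_langPoly_eq [IsAlgClosed k] (hA : A 0 ≠ 0) (hq : 1 < q) (m : ℕ) :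
    ∃ t ≠ 0, (langPoly A q m).eval t = t := by
  -- `langPoly A q m - X = X * (X * h - 1)`, and the roots of `X * h - 1` are nonzero
  obtain ⟨h, hh⟩ : X ^ 2 ∣ langPoly A q m :=
    (pow_dvd_pow X hq).trans (X_pow_dvd_langPoly (by omega) m)
  have h0 : h ≠ 0 := by
    rintro rfl
    have hdeg := natDegree_langPoly hA hq m
    rw [hh, mul_zero, natDegree_zero] at hdeg
    exact absurd hdeg.symm (by positivity)
  have hXh : 0 < (X * h).degree :=
    natDegree_pos_iff_degree_pos.mp (by rw [natDegree_X_mul h0]; omega)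
  obtain ⟨t, ht⟩ := IsAlgClosed.exists_root (X * h - 1) <| by
    rw [degree_sub_eq_left_of_degree_lt (by rwa [degree_one])]
    exact hXh.ne'
  have hth : t * h.eval t = 1 := by simpa [sub_eq_zero] using ht
  refine ⟨t, left_ne_zero_of_mul_eq_one hth, ?_⟩
  rw [hh, eval_mul, eval_pow, eval_X, sq, mul_assoc, hth, mul_one]

lemma exists_mem_span_image_range {R M : Type*} [Semiring R] [AddCommMonoid M] [Module R M]
    [IsNoetherian R M] (f : ℕ → M) : ∃ m, f m ∈ span R (f '' ↑(Finset.range m)) := by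
  let S : ℕ →o Submodule R M :=
    ⟨fun m => span R (f '' ↑(Finset.range m)), fun m n hmn =>
      span_mono (Set.image_mono (by simpa using hmn))⟩
  obtain ⟨m, hm⟩ := monotone_stabilizes_iff_noetherian.mpr ‹_› S
  refine ⟨m, ?_⟩
  change f m ∈ S m
  rw [hm (m + 1) m.le_succ]
  exact subset_span ⟨m, by simp, rfl⟩

variable {V : Type*} [AddCommGroup V] [Module k V] {τ : k →+* k}

lemma apply_sum_smul_iterate (φ : V →ₛₗ[τ] V) (v : V) (c : ℕ → k) (N : ℕ) :
    φ (∑ i ∈ Finset.range N, c i • φ^[i] v) = ∑ i ∈ Finset.range N, τ (c i) • φ^[i + 1] v := by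
  simp only [map_sum, map_smulₛₗ, Function.iterate_succ_apply']

lemma sum_smul_iterate_mem_span (φ : V → V) (v : V) (c : ℕ → k) (N : ℕ) :
    ∑ i ∈ Finset.range N, c i • φ^[i] v ∈ span k ((φ^[·] v) '' ↑(Finset.range N)) :=
  (mem_span_image_finset_iff_exists_fun' k).mpr ⟨c, rfl⟩

lemma exists_iterate_succ_eq_sum [FiniteDimensional k V] (hτ : Function.Surjective τ)
    (φ : V →ₛₗ[τ] V) (hφ : Function.Injective φ) {v : V} (hv : v ≠ 0) :
    ∃ (m : ℕ) (A : ℕ → k), A 0 ≠ 0 ∧ ∑ i ∈ Finset.range (m + 1), A i • φ^[i] v = φ^[m + 1] v ∧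
      φ^[m] v ∉ span k ((φ^[·] v) '' ↑(Finset.range m)) := by
  classical
  have hex := exists_mem_span_image_range (R := k) (φ^[·] v)
  obtain ⟨m, hm⟩ : ∃ m, Nat.find hex = m + 1 := by
    refine Nat.exists_eq_succ_of_ne_zero fun h => hv ?_
    have h0 := Nat.find_spec hex
    rw [h] at h0
    simpa using h0
  obtain ⟨A, hA⟩ := (mem_span_image_finset_iff_exists_fun' k).mp (hm ▸ Nat.find_spec hex)
  have hmin : φ^[m] v ∉ span k ((φ^[·] v) '' ↑(Finset.range m)) := Nat.find_min hex (by omega)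
  refine ⟨m, A, fun hA0 => hmin ?_, hA, hmin⟩
  -- if `A 0 = 0`, then `φ^[m+1] v = φ (∑ s i • φ^[i] v)` with `τ (s i) = A (i + 1)`
  choose s hs using fun i => hτ (A (i + 1))
  convert sum_smul_iterate_mem_span φ v s m
  refine hφ ?_
  rw [apply_sum_smul_iterate, ← Function.iterate_succ_apply' φ, ← hA, Finset.sum_range_succ', hA0,
    zero_smul, add_zero]
  simp only [hs]

theorem exists_ne_zero_apply_eq_self [IsAlgClosed k] [FiniteDimensional k V] [Nontrivial V]
    (hq : 1 < q) (hτ : ∀ c, τ c = c ^ q) (φ : V →ₛₗ[τ] V) (hφ : Function.Injective φ) :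
    ∃ x ≠ 0, φ x = x := by
  obtain ⟨v, hv⟩ := exists_ne (0 : V)
  have hτs : Function.Surjective τ := fun c => by
    simpa only [hτ] using IsAlgClosed.exists_pow_nat_eq c (by omega : 0 < q)
  obtain ⟨m, A, hA0, hA, hmin⟩ := exists_iterate_succ_eq_sum hτs φ hφ hv
  obtain ⟨t, ht0, ht⟩ := exists_ne_zero_eval_langPoly_eq hA0 hq m
  set γ : ℕ → k := fun i => (langPoly A q i).eval t
  have hγm : γ m = t := ht
  refine ⟨∑ i ∈ Finset.range (m + 1), γ i • φ^[i] v, fun h0 => hmin ?_, ?_⟩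
  · rw [Finset.sum_range_succ, add_eq_zero_iff_eq_neg', hγm] at h0
    rw [← inv_smul_smul₀ ht0 (φ^[m] v), h0]
    exact smul_mem _ _ (neg_mem (sum_smul_iterate_mem_span φ v γ m))
  · have hγ0 : γ 0 = t ^ q * A 0 := by
      simp only [γ, langPoly, eval_mul, eval_pow, eval_C, eval_X]; ring
    have hγ (i : ℕ) : γ (i + 1) = γ i ^ q + t ^ q * A (i + 1) := by
      simp only [γ, langPoly, eval_add, eval_mul, eval_pow, eval_C, eval_X]; ring
    rw [apply_sum_smul_iterate, Finset.sum_range_succ, hτ, hγm, ← hA, Finset.smul_sum,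
      Finset.sum_range_succ' _ m, Finset.sum_range_succ' _ m, ← add_assoc,
      ← Finset.sum_add_distrib, hγ0]
    simp only [hτ, smul_smul, ← add_smul, hγ]

lemma exists_mem_span_apply_sub_smul_eq (φ : V →ₛₗ[τ] V)
    {a : k} (ha : ∀ c, ∃ d, τ d - a * d = c) {u : V} (hu : u ∈ span k {x | φ x = x}) :
    ∃ w ∈ span k {x | φ x = x}, φ w - a • w = u := by
  obtain ⟨n, c, x, rfl⟩ := mem_span_set'.mp hu
  choose d hd using fun i => ha (c i)
  refine ⟨∑ i, d i • (x i : V), sum_mem fun i _ => smul_mem _ _ (subset_span (x i).2), ?_⟩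
  simp only [map_sum, map_smulₛₗ, (x _).2.out, Finset.smul_sum, smul_smul, ← Finset.sum_sub_distrib,
    ← sub_smul, hd]

theorem span_setOf_apply_eq_self_eq_top [IsAlgClosed k] [FiniteDimensional k V] (hq : 1 < q)
    (hτ : ∀ c, τ c = c ^ q) (φ : V →ₛₗ[τ] V) (hφ : Function.Injective φ) : span k {x | φ x = x} = ⊤ := by
  set U := span k {x | φ x = x}
  have hτa (a : k) (c : k) : ∃ d, τ d - a * d = c := by
    simpa only [hτ] using IsAlgClosed.exists_pow_sub_mul_eq hq a c
  by_contra hU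
  have : Nontrivial (V ⧸ U) := Quotient.nontrivial_iff.mpr hU
  have hUφ : U ≤ U.comap φ := span_le.mpr fun x hx => by
    simpa [show φ x = x from hx] using subset_span hx
  have hφU : Function.Injective (U.mapQ U φ hUφ) := by
    refine (injective_iff_map_eq_zero _).mpr fun x hx => ?_
    obtain ⟨y, rfl⟩ := Submodule.Quotient.mk_surjective U x
    obtain ⟨w, hw, hwy⟩ :=
      exists_mem_span_apply_sub_smul_eq φ (hτa 0) ((Quotient.mk_eq_zero U).mp hx)
    rw [zero_smul, sub_zero] at hwy
    rw [Quotient.mk_eq_zero, ← hφ hwy]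
    exact hw
  -- a fixed vector of `φ` on `V ⧸ U` lifts to one of `φ` on `V`, since `φ - 1` maps `U` onto `U`
  obtain ⟨x, hx0, hx⟩ := exists_ne_zero_apply_eq_self hq hτ _ hφU
  obtain ⟨y, rfl⟩ := Submodule.Quotient.mk_surjective U x
  have hy : y - φ y ∈ U := by
    rw [mapQ_apply, ← sub_eq_zero, ← Quotient.mk_sub, Quotient.mk_eq_zero] at hx
    rw [← neg_sub]
    exact neg_mem hx
  obtain ⟨w, hw, hwy⟩ := exists_mem_span_apply_sub_smul_eq φ (hτa 1) hy
  have hyw : y + w ∈ U := subset_span (show φ (y + w) = y + w by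
    rw [one_smul] at hwy
    rw [map_add]; linear_combination (norm := abel) hwy)
  exact hx0 ((Quotient.mk_eq_zero U).mpr (by simpa using sub_mem hyw hw))

theorem exists_basis_apply_eq_self [IsAlgClosed k] [FiniteDimensional k V] (hq : 1 < q)
    (hτ : ∀ c, τ c = c ^ q) (φ : V →ₛₗ[τ] V) (hφ : Function.Injective φ) :
    ∃ (s : Set V) (b : Module.Basis s k V), ∀ i, φ (b i) = b i := by
  obtain ⟨s, hs, hspan, hli⟩ := exists_linearIndependent k {x | φ x = x}
  refine ⟨s, .mk hli ?_, fun i => ?_⟩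
  · rw [Subtype.range_coe, hspan, span_setOf_apply_eq_self_eq_top hq hτ φ hφ]
  · rw [Module.Basis.mk_apply]
    exact hs i.2

theorem surjective_apply_sub_self [IsAlgClosed k] [FiniteDimensional k V] (hq : 1 < q)
    (hτ : ∀ c, τ c = c ^ q) (φ : V →ₛₗ[τ] V) (hφ : Function.Injective φ) :
    Function.Surjective fun u => φ u - u := by
  intro w
  obtain ⟨u, -, hu⟩ := exists_mem_span_apply_sub_smul_eq φ
    (fun c => by simpa only [hτ] using IsAlgClosed.exists_pow_sub_mul_eq hq 1 c)
    (span_setOf_apply_eq_self_eq_top hq hτ φ hφ ▸ mem_top : w ∈ span k {x | φ x = x})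
  exact ⟨u, by rwa [one_smul] at hu⟩

end Lang

namespace IsLocalRing.ResidueField

variable {R : Type*} [CommRing R] [IsLocalRing R] (σ : R ≃+* R)

noncomputable def mapSemilinearEquiv : ResidueField R ≃ₛₗ[(σ : R →+* R)] ResidueField R where
  __ := mapEquiv σ
  map_smul' c x := by
    simp [Algebra.smul_def, mapEquiv_apply]

variable {M : Type*} [AddCommGroup M] [Module R M]

noncomputable def baseChangeSemilinearMap (f : M ≃ₛₗ[(σ : R →+* R)] M) :
    ResidueField R ⊗[R] M →ₛₗ[(mapEquiv σ : ResidueField R →+* ResidueField R)]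
      ResidueField R ⊗[R] M where
  toFun := TensorProduct.congr (mapSemilinearEquiv σ) f
  map_add' := map_add _
  map_smul' s x := by
    induction x using TensorProduct.induction_on with
    | zero => simp
    | tmul r m => simp [smul_tmul', mapSemilinearEquiv]
    | add x y hx hy => simp_all [smul_add]

lemma baseChangeSemilinearMap_tmul (f : M ≃ₛₗ[(σ : R →+* R)] M) (m : M) :
    baseChangeSemilinearMap σ f (1 ⊗ₜ m) = 1 ⊗ₜ f m := by
  simp [baseChangeSemilinearMap, mapSemilinearEquiv]

lemma baseChangeSemilinearMap_injective (f : M ≃ₛₗ[(σ : R →+* R)] M) :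
    Function.Injective (baseChangeSemilinearMap σ f) :=
  (TensorProduct.congr (mapSemilinearEquiv σ) f).injective

end IsLocalRing.ResidueField

section Adic

variable {R M : Type*} [CommRing R] [AddCommGroup M] [Module R M]

lemma Submodule.mem_span_singleton_pow_smul_top {π : R} {n : ℕ} {x : M} :
    x ∈ Ideal.span {π} ^ n • (⊤ : Submodule R M) ↔ ∃ y, π ^ n • y = x := by
  simp [Ideal.span_singleton_pow, Submodule.ideal_span_singleton_smul,
    Submodule.mem_smul_pointwise_iff_exists]

lemma Module.Basis.mem_smul_top_iff {ι : Type*} [Fintype ι] (b : Module.Basis ι R M) {I : Ideal R}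
    {x : M} : x ∈ I • (⊤ : Submodule R M) ↔ ∀ i, b.repr x i ∈ I := by
  refine ⟨fun hx i => ?_, fun h => ?_⟩
  · refine Submodule.smul_induction_on (p := fun x => b.repr x i ∈ I) hx (fun r hr m _ => ?_)
      fun x y hx hy => ?_
    · simpa using I.mul_mem_right _ hr
    · simpa using add_mem hx hy
  · rw [← b.sum_repr x]
    exact Submodule.sum_mem _ fun i _ => Submodule.smul_mem_smul (h i) trivial

lemma Module.Basis.isPrecomplete {ι : Type*} [Finite ι] (b : Module.Basis ι R M) (I : Ideal R)
    [IsPrecomplete I R] : IsPrecomplete I M := by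
  have := Fintype.ofFinite ι
  refine ⟨fun f hf => ?_⟩
  have hcoord (i : ι) {m n : ℕ} (hmn : m ≤ n) :
      b.repr (f m) i ≡ b.repr (f n) i [SMOD (I ^ m • ⊤ : Submodule R R)] := by
    rw [SModEq.sub_mem, smul_eq_mul, Ideal.mul_top, ← Finsupp.sub_apply, ← map_sub]
    exact (b.mem_smul_top_iff).mp (SModEq.sub_mem.mp (hf hmn)) i
  choose L hL using fun i => IsPrecomplete.prec ‹_› (hcoord i)
  refine ⟨∑ i, L i • b i, fun n => SModEq.sub_mem.mpr ((b.mem_smul_top_iff).mpr fun i => ?_)⟩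
  rw [map_sub, Finsupp.sub_apply, b.repr_sum_self]
  simpa [Ideal.mul_top] using SModEq.sub_mem.mp (hL i n)

theorem surjective_of_forall_exists_apply_eq_add_smul (π : R)
    [IsPrecomplete (Ideal.span {π}) M] [IsHausdorff (Ideal.span {π}) M] (f : M →+ M)
    (hf : ∀ x, f (π • x) = π • f x) (h : ∀ z, ∃ y w, f y = z + π • w) :
    Function.Surjective f := by
  intro z
  have hfpow (n : ℕ) (x : M) : f (π ^ n • x) = π ^ n • f x := by
    induction n with
    | zero => simp
    | succ n ih => rw [pow_succ', mul_smul, hf, ih, ← mul_smul]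
  choose y w hyw using h
  -- `a m = (y_m, w_m)` with `f y_m = z + π ^ m • w_m` and `y_(m+1) - y_m ∈ π ^ m • M`
  let a : ℕ → M × M := fun m =>
    Nat.rec (0, -z) (fun m am => (am.1 + π ^ m • y (-am.2), w (-am.2))) m
  have ha (m : ℕ) : f (a m).1 = z + π ^ m • (a m).2 := by
    induction m with
    | zero => simp [a]
    | succ m ih =>
      change f ((a m).1 + π ^ m • y (-(a m).2)) = z + π ^ (m + 1) • w (-(a m).2)
      rw [map_add, hfpow, ih, hyw, smul_add, smul_neg, pow_succ, mul_smul]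
      abel
  have hcauchy {m n : ℕ} (hmn : m ≤ n) :
      (a m).1 ≡ (a n).1 [SMOD (Ideal.span {π} ^ m • ⊤ : Submodule R M)] := by
    induction n, hmn using Nat.le_induction with
    | base => rfl
    | succ n hmn ih =>
      refine ih.trans (SModEq.mono (Submodule.pow_smul_top_le _ M hmn) ?_)
      refine SModEq.sub_mem.mpr (Submodule.mem_span_singleton_pow_smul_top.mpr ⟨-y (-(a n).2), ?_⟩)
      change _ = (a n).1 - ((a n).1 + π ^ n • y (-(a n).2))
      rw [smul_neg]; abel
  obtain ⟨L, hL⟩ := IsPrecomplete.prec ‹_› hcauchy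
  refine ⟨L, sub_eq_zero.mp (IsHausdorff.haus ‹_› _ fun n => ?_)⟩
  obtain ⟨d, hd⟩ := Submodule.mem_span_singleton_pow_smul_top.mp (SModEq.sub_mem.mp (hL n))
  rw [SModEq.zero, Submodule.mem_span_singleton_pow_smul_top]
  refine ⟨(a n).2 - f d, ?_⟩
  rw [show L = (a n).1 - π ^ n • d by rw [hd]; abel, map_sub, hfpow, ha, smul_sub]
  abel

end Adic

noncomputable def IsLocalRing.basisOfTmulEqBasis {R M ι : Type*} [CommRing R] [IsLocalRing R]
    [AddCommGroup M] [Module R M] [Module.Flat R M] [Module.Finite R M] (f : ι → M)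
    (b : Module.Basis ι (ResidueField R) (ResidueField R ⊗[R] M)) (hb : ∀ i, 1 ⊗ₜ f i = b i) :
    Module.Basis ι R M :=
  .mk (Module.IsLocalRing.linearIndependent_of_flat f <| by
      convert b.linearIndependent
      exact funext hb)
    (span_eq_top_of_tmul_eq_basis f b hb).ge

@[simp]
lemma IsLocalRing.basisOfTmulEqBasis_apply {R M ι : Type*} [CommRing R] [IsLocalRing R]
    [AddCommGroup M] [Module R M] [Module.Flat R M] [Module.Finite R M] (f : ι → M)
    (b : Module.Basis ι (ResidueField R) (ResidueField R ⊗[R] M)) (hb : ∀ i, 1 ⊗ₜ f i = b i)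
    (i : ι) : basisOfTmulEqBasis f b hb i = f i :=
  Module.Basis.mk_apply ..

section Lift

variable {O Λ : Type*} [CommRing O] [IsDomain O] [IsDiscreteValuationRing O] [AddCommGroup Λ]
  [Module O Λ] {π : O}

lemma one_tmul_eq_zero_iff_exists_smul_eq (hπ : Irreducible π) {x : Λ} :
    (1 : ResidueField O) ⊗ₜ[O] x = 0 ↔ ∃ w, π • w = x := by
  rw [← pow_one π, ← Submodule.mem_span_singleton_pow_smul_top, pow_one, ← hπ.maximalIdeal_eq,
    ← LinearMap.ker_tensorProductMk]
  rfl

variable [IsAdicComplete (maximalIdeal O) O] [Module.Free O Λ] [Module.Finite O Λ]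
  {σ : O ≃+* O} (Ψ : Λ ≃ₛₗ[(σ : O →+* O)] Λ)

theorem surjective_apply_sub_self_of_residueField (hπ : Irreducible π) (hσπ : σ π = π)
    (hψ : Function.Surjective fun u => ResidueField.baseChangeSemilinearMap σ Ψ u - u) :
    Function.Surjective fun y => Ψ y - y := by
  have : IsPrecomplete (Ideal.span {π}) Λ := by
    rw [← hπ.maximalIdeal_eq]
    exact (Module.Free.chooseBasis O Λ).isPrecomplete _
  have : IsHausdorff (Ideal.span {π}) Λ := by
    rw [← hπ.maximalIdeal_eq]
    infer_instance
  refine surjective_of_forall_exists_apply_eq_add_smul π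
    (Ψ.toLinearMap.toAddMonoidHom - AddMonoidHom.id Λ) (fun x => by simp [hσπ, smul_sub])
    fun z => ?_
  obtain ⟨u, hu⟩ := hψ (1 ⊗ₜ z)
  obtain ⟨y, rfl⟩ := TensorProduct.mk_surjective O Λ (ResidueField O) residue_surjective u
  have hyz : (1 : ResidueField O) ⊗ₜ[O] (Ψ y - y - z) = 0 := by
    rw [tmul_sub, tmul_sub, ← ResidueField.baseChangeSemilinearMap_tmul, sub_eq_zero]
    exact hu
  obtain ⟨w, hw⟩ := (one_tmul_eq_zero_iff_exists_smul_eq hπ).mp hyz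
  exact ⟨y, w, by simp [hw]⟩

theorem exists_apply_eq_self_tmul_eq (hπ : Irreducible π) (hσπ : σ π = π)
    (hψ : Function.Surjective fun u => ResidueField.baseChangeSemilinearMap σ Ψ u - u)
    {v : ResidueField O ⊗[O] Λ} (hv : ResidueField.baseChangeSemilinearMap σ Ψ v = v) :
    ∃ g : Λ, Ψ g = g ∧ 1 ⊗ₜ g = v := by
  obtain ⟨e, rfl⟩ := TensorProduct.mk_surjective O Λ (ResidueField O) residue_surjective v
  rw [mk_apply, ResidueField.baseChangeSemilinearMap_tmul, ← sub_eq_zero, ← tmul_sub] at hv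
  obtain ⟨z, hz⟩ := (one_tmul_eq_zero_iff_exists_smul_eq hπ).mp hv
  obtain ⟨y, rfl⟩ := surjective_apply_sub_self_of_residueField Ψ hπ hσπ hψ z
  refine ⟨e - π • y, ?_, ?_⟩
  · rw [map_sub, map_smulₛₗ, RingEquiv.coe_toRingHom, hσπ]
    linear_combination (norm := module) -hz
  · rw [mk_apply, tmul_sub, sub_eq_self]
    exact (one_tmul_eq_zero_iff_exists_smul_eq hπ).mpr ⟨y, rfl⟩

end Lift

section FixedSubalgebra

variable {O O₀ Λ : Type*} [CommRing O] [CommRing O₀] [Algebra O₀ O] [Ring Λ] [Algebra O Λ]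
  [Algebra O₀ Λ] [IsScalarTower O₀ O Λ] {σ : O ≃+* O}
  (hrange : Set.range (algebraMap O₀ O) = {x | σ x = x}) (Ψ : Λ ≃+* Λ)
  (hΨ : ∀ (c : O) (a : Λ), Ψ (c • a) = σ c • Ψ a)

def fixedSubalgebra : Subalgebra O₀ Λ where
  carrier := {a | Ψ a = a}
  mul_mem' {a b} ha hb := by simp_all
  add_mem' {a b} ha hb := by simp_all
  algebraMap_mem' r := by
    change Ψ _ = _
    rw [IsScalarTower.algebraMap_apply O₀ O Λ, Algebra.algebraMap_eq_smul_one, hΨ, map_one,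
      show σ (algebraMap O₀ O r) = _ from hrange.subset ⟨r, rfl⟩]

lemma mem_fixedSubalgebra {a : Λ} : a ∈ fixedSubalgebra hrange Ψ hΨ ↔ Ψ a = a :=
  Iff.rfl

variable {ι : Type*} (b : Module.Basis ι O Λ) (hb : ∀ i, Ψ (b i) = b i)

lemma linearIndependent_fixedSubalgebra (hinj : Function.Injective (algebraMap O₀ O)) :
    LinearIndependent O₀ fun i =>
      (⟨b i, (mem_fixedSubalgebra hrange Ψ hΨ).2 (hb i)⟩ : fixedSubalgebra hrange Ψ hΨ) :=
  .of_comp (fixedSubalgebra hrange Ψ hΨ).val.toLinearMap <|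
    b.linearIndependent.restrict_scalars <| by simpa [← Algebra.algebraMap_eq_smul_one] using hinj

lemma span_fixedSubalgebra [Fintype ι] :
    ⊤ ≤ Submodule.span O₀ (Set.range fun i =>
      (⟨b i, (mem_fixedSubalgebra hrange Ψ hΨ).2 (hb i)⟩ : fixedSubalgebra hrange Ψ hΨ)) := by
  rintro ⟨a, ha⟩ -
  rw [mem_fixedSubalgebra] at ha
  have hfix (i : ι) : σ (b.repr a i) = b.repr a i := by
    have hΨa : a = ∑ j, σ (b.repr a j) • b j := by
      conv_lhs => rw [← ha, ← b.sum_repr a]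
      simp only [map_sum, hΨ, hb]
    have := congrArg (fun x => b.repr x i) hΨa
    rw [b.repr_sum_self] at this
    exact this.symm
  choose r hr using fun i => hrange.superset (hfix i)
  have hsum : (⟨a, ha⟩ : fixedSubalgebra hrange Ψ hΨ) =
      ∑ i, r i • ⟨b i, (mem_fixedSubalgebra hrange Ψ hΨ).2 (hb i)⟩ := by
    ext
    change a = _
    rw [AddSubmonoidClass.coe_finsetSum]
    conv_lhs => rw [← b.sum_repr a]
    refine Finset.sum_congr rfl fun i _ => ?_
    rw [SetLike.val_smul, ← hr, algebraMap_smul]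
  rw [hsum]
  exact Submodule.sum_mem _ fun i _ => Submodule.smul_mem _ _ (Submodule.subset_span ⟨i, rfl⟩)

noncomputable def fixedSubalgebraBasis [Fintype ι] (hinj : Function.Injective (algebraMap O₀ O)) :
    Module.Basis ι O₀ (fixedSubalgebra hrange Ψ hΨ) :=
  .mk (linearIndependent_fixedSubalgebra hrange Ψ hΨ b hb hinj)
    (span_fixedSubalgebra hrange Ψ hΨ b hb)

@[simp]
lemma coe_fixedSubalgebraBasis [Fintype ι] (hinj : Function.Injective (algebraMap O₀ O)) (i : ι) :
    (fixedSubalgebraBasis hrange Ψ hΨ b hb hinj i : Λ) = b i := by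
  simp [fixedSubalgebraBasis]

noncomputable def fixedSubalgebraTensorAlgEquiv [Fintype ι]
    (hinj : Function.Injective (algebraMap O₀ O)) :
    O ⊗[O₀] fixedSubalgebra hrange Ψ hΨ ≃ₐ[O] Λ :=
  let f := Algebra.TensorProduct.lift (Algebra.ofId O Λ) (fixedSubalgebra hrange Ψ hΨ).val
    fun x y => show Commute (Algebra.ofId O Λ x) _ from Algebra.commute_algebraMap_left x _
  let b' := (fixedSubalgebraBasis hrange Ψ hΨ b hb hinj).baseChange O
  have hf : f.toLinearMap = b'.equiv b (Equiv.refl ι) :=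
    b'.ext fun i => by
      rw [LinearEquiv.coe_coe, Module.Basis.equiv_apply]
      simp [f, b']
  AlgEquiv.ofBijective f (by
    change Function.Bijective f.toLinearMap
    rw [hf]
    exact LinearEquiv.bijective _)

end FixedSubalgebra

theorem stmt_4_general (p : ℕ) [Fact p.Prime]
    (O : Type*) [CommRing O] [IsDomain O] [IsDiscreteValuationRing O]
    [IsAdicComplete (maximalIdeal O) O]
    [IsAlgClosed (ResidueField O)]
    (π : O) (hπ : Irreducible π)
    (σ : O ≃+* O) (hσπ : σ π = π)
    (n : ℕ) (hn : 1 ≤ n) (q : ℕ) (hq : q = p ^ n)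
    (hσres : ∀ x : O, residue O (σ x) = residue O x ^ q)
    -- `O₀` is the fixed subring `O^⟨σ⟩`
    (O₀ : Type*) [CommRing O₀] [Algebra O₀ O]
    (hinj : Function.Injective (algebraMap O₀ O))
    (hrange : Set.range (algebraMap O₀ O) = {x : O | σ x = x})
    -- `Λ` is an `O`-order
    (Λ : Type*) [Ring Λ] [Algebra O Λ] [Module.Free O Λ] [Module.Finite O Λ]
    [Algebra O₀ Λ] [IsScalarTower O₀ O Λ]
    -- an `O`-algebra isomorphism `Λ ≅ Λ^(σ)`, i.e. a `σ`-semilinear ring automorphism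
    (Φ : Λ ≃+* Λ) (hΦ : ∀ (c : O) (a : Λ), Φ (c • a) = σ.symm c • Φ a) :
    ∃ Λ₀ : Subalgebra O₀ Λ, Module.Free O₀ Λ₀ ∧ Module.Finite O₀ Λ₀ ∧
      Nonempty ((O ⊗[O₀] Λ₀) ≃ₐ[O] Λ) := by
  have hq1 : 1 < q := hq ▸ Nat.one_lt_pow (by omega) (Fact.out : p.Prime).one_lt
  have hτ (c : ResidueField O) : (ResidueField.mapEquiv σ : ResidueField O →+* _) c = c ^ q := by
    obtain ⟨x, rfl⟩ := residue_surjective c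
    simpa [ResidueField.mapEquiv_apply] using hσres x
  have hΨ (c : O) (a : Λ) : Φ.symm (c • a) = σ c • Φ.symm a :=
    Φ.injective (by simp [hΦ])
  let Ψ : Λ ≃ₛₗ[(σ : O →+* O)] Λ := { Φ.symm.toAddEquiv with map_smul' := hΨ }
  have hψ := ResidueField.baseChangeSemilinearMap_injective σ Ψ
  obtain ⟨s, bV, hbV⟩ := exists_basis_apply_eq_self hq1 hτ _ hψ
  choose g hgfix hg using fun i =>
    exists_apply_eq_self_tmul_eq Ψ hπ hσπ (surjective_apply_sub_self hq1 hτ _ hψ) (hbV i)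
  have := FiniteDimensional.fintypeBasisIndex bV
  let b := basisOfTmulEqBasis g bV hg
  have hb (i : s) : Φ.symm (b i) = b i := by
    rw [basisOfTmulEqBasis_apply]
    exact hgfix i
  let b₀ := fixedSubalgebraBasis hrange Φ.symm hΨ b hb hinj
  exact ⟨_, .of_basis b₀, .of_basis b₀, ⟨fixedSubalgebraTensorAlgEquiv hrange Φ.symm hΨ b hb hinj⟩⟩

theorem stmt_4 (p : ℕ) [Fact p.Prime]
    (O : Type*) [CommRing O] [IsDomain O] [IsDiscreteValuationRing O]
    [IsAdicComplete (maximalIdeal O) O]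
    [IsAlgClosed (ResidueField O)] [CharP (ResidueField O) p]
    (π : O) (hπ : Irreducible π)
    (σ : O ≃+* O) (hσπ : σ π = π)
    (n : ℕ) (hn : 1 ≤ n) (q : ℕ) (hq : q = p ^ n)
    (hσres : ∀ x : O, residue O (σ x) = residue O x ^ q)
    -- `O₀` is the fixed subring `O^⟨σ⟩`
    (O₀ : Type*) [CommRing O₀] [Algebra O₀ O]
    (hinj : Function.Injective (algebraMap O₀ O))
    (hrange : Set.range (algebraMap O₀ O) = {x : O | σ x = x})
    -- `Λ` is an `O`-order
    (Λ : Type*) [Ring Λ] [Algebra O Λ] [Module.Free O Λ] [Module.Finite O Λ]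
    [Algebra O₀ Λ] [IsScalarTower O₀ O Λ]
    -- an `O`-algebra isomorphism `Λ ≅ Λ^(σ)`, i.e. a `σ`-semilinear ring automorphism
    (Φ : Λ ≃+* Λ) (hΦ : ∀ (c : O) (a : Λ), Φ (c • a) = σ.symm c • Φ a) :
    ∃ Λ₀ : Subalgebra O₀ Λ, Module.Free O₀ Λ₀ ∧ Module.Finite O₀ Λ₀ ∧
      Nonempty ((O ⊗[O₀] Λ₀) ≃ₐ[O] Λ) :=
  stmt_4_general p O π hπ σ hσπ n hn q hq hσres O₀ hinj hrange Λ Φ hΦ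
end

section
/- Let Λ be a symmetric O₀-order in a semisimple K₀-algebra A with symmetrizing form T, and let e ∈ Λ be an idempotent such that e does not annihilate any nonzero element of Z(A). Then eΛe is a symmetric O₀-order in eAe with symmetrizing form the restriction of T, and eΛe has the same defect as Λ. -/
/-- `ν : K → ℚ` is a discrete (exponential) valuation. -/
structure IsQValuation {K : Type*} [Field K] (ν : K → ℚ) : Prop where
  map_one : ν 1 = 0
  map_mul : ∀ x y : K, x ≠ 0 → y ≠ 0 → ν (x * y) = ν x + ν y
  map_add : ∀ x y : K, x ≠ 0 → y ≠ 0 → x + y ≠ 0 → min (ν x) (ν y) ≤ ν (x + y)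
  discrete : ∃ δ : ℚ, 0 < δ ∧ ∀ x : K, x ≠ 0 → ∃ m : ℤ, ν x = m * δ

open scoped Classical in
theorem stmt_14 (p : ℕ) [Fact p.Prime]
    (K₀ : Type*) [Field K₀] [CharZero K₀]
    (ν : K₀ → ℚ) (hν : IsQValuation ν) (hνp : ν (p : K₀) = 1)
    -- `O₀` is the valuation ring of `ν`
    (O₀ : Type*) [CommRing O₀] [Algebra O₀ K₀]
    (hinj : Function.Injective (algebraMap O₀ K₀))
    (hrange : Set.range (algebraMap O₀ K₀) = {x : K₀ | x = 0 ∨ 0 ≤ ν x})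
    -- `A` is a (split) semisimple `K₀`-algebra
    (A : Type*) [Ring A] [Algebra K₀ A] [FiniteDimensional K₀ A] [IsSemisimpleRing A]
    [Algebra O₀ A] [IsScalarTower O₀ K₀ A]
    (n : ℕ) (dims : Fin n → ℕ) (hdims : ∀ i, 0 < dims i)
    (ψ : A ≃ₐ[K₀] (∀ i, Matrix (Fin (dims i)) (Fin (dims i)) K₀))
    -- the symmetrising form `T = Σ uᵢ·Trᵢ` for the order `Λ`
    (u : Fin n → K₀ˣ) (T : A → A → K₀)
    (hTu : ∀ a b, T a b = ∑ i, (u i : K₀) * Matrix.trace (ψ a i * ψ b i))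
    -- `Λ` is an `O₀`-order in `A`, self-dual with respect to `T`
    (Λ : Subalgebra O₀ A)
    (hΛfg : Λ.toSubmodule.FG) (hΛspan : Submodule.span K₀ (Λ : Set A) = ⊤)
    (hsd : ∀ a : A, a ∈ Λ ↔ ∀ x ∈ Λ, T a x ∈ Set.range (algebraMap O₀ K₀))
    -- `e ∈ Λ` an idempotent not annihilating any nonzero central element
    (e : A) (he : e ∈ Λ) (hidem : e * e = e)
    (hann : ∀ z ∈ Set.center A, e * z = 0 → z = 0) :
    -- `eΛe` is self-dual in `eAe` with respect to the restriction of `T`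
    (∀ a : A, (∃ b ∈ Λ, a = e * b * e) ↔
      ((∃ c : A, a = e * c * e) ∧ ∀ x ∈ Λ, T a (e * x * e) ∈ Set.range (algebraMap O₀ K₀))) ∧
    -- `e` is nonzero in every Wedderburn component of `A`
    (∀ i, ψ e i ≠ 0) ∧
    -- hence the defect of `eΛe` (computed on the surviving components) equals that of `Λ`
    ((Finset.univ.filter fun i => ψ e i ≠ 0).sup
        (fun i => ((-ν (u i) : ℚ) : WithBot ℚ))
      = Finset.univ.sup (fun i => ((-ν (u i) : ℚ) : WithBot ℚ))) := by

  have hEE : ∀ i, ψ e i * ψ e i = ψ e i := by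
    intro i
    have : ψ e * ψ e = ψ e := by rw [← map_mul, hidem]
    exact congrFun this i
  -- e is nonzero in every component
  have hcomp : ∀ i, ψ e i ≠ 0 := by
    intro i hzero
    set z : A := ψ.symm (Pi.single i (1 : Matrix (Fin (dims i)) (Fin (dims i)) K₀)) with hz
    have hψz : ψ z = Pi.single i 1 := ψ.apply_symm_apply _
    have hzc : z ∈ Set.center A := by
      rw [Semigroup.mem_center_iff]
      intro g
      apply ψ.injective
      rw [map_mul, map_mul, hψz]
      funext j
      simp only [Pi.mul_apply]
      by_cases hji : j = i
      · subst hji; simp [Pi.single_eq_same]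
      · simp [Pi.single_eq_of_ne hji]
    have hez : e * z = 0 := by
      apply ψ.injective
      rw [map_mul, hψz, map_zero]
      funext j
      simp only [Pi.mul_apply, Pi.zero_apply]
      by_cases hji : j = i
      · subst hji; simp [Pi.single_eq_same, hzero]
      · simp [Pi.single_eq_of_ne hji]
    have hz0 : z = 0 := hann z hzc hez
    have h0 : (Pi.single i (1 : Matrix (Fin (dims i)) (Fin (dims i)) K₀) :
        ∀ j, Matrix (Fin (dims j)) (Fin (dims j)) K₀) = 0 := by
      rw [← hψz, hz0, map_zero]
    have h1 : (1 : Matrix (Fin (dims i)) (Fin (dims i)) K₀) = 0 := by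
      have := congrFun h0 i
      simpa [Pi.single_eq_same] using this
    have i0 : Fin (dims i) := ⟨0, hdims i⟩
    have := congrFun (congrFun h1 i0) i0
    simp [Matrix.one_apply_eq] at this
  refine ⟨?_, hcomp, ?_⟩
  · intro a
    constructor
    · rintro ⟨b, hb, rfl⟩
      refine ⟨⟨b, rfl⟩, fun x hx => ?_⟩
      exact (hsd _).mp (Λ.mul_mem (Λ.mul_mem he hb) he) _ (Λ.mul_mem (Λ.mul_mem he hx) he)
    · rintro ⟨⟨c, rfl⟩, hT⟩
      have key : ∀ x : A, T (e * c * e) x = T (e * c * e) (e * x * e) := by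
        intro x
        rw [hTu, hTu]
        refine Finset.sum_congr rfl fun i _ => ?_
        congr 1
        have hm : ∀ a b : A, ψ (a * b) i = ψ a i * ψ b i := by
          intro a b; rw [map_mul]; rfl
        rw [hm, hm, hm, hm]
        set E := ψ e i
        set C := ψ c i
        set X := ψ x i
        have hE : E * E = E := hEE i
        have h2 : E * C * E * (E * X * E) = E * C * E * X * E := by
          calc E * C * E * (E * X * E) = E * C * (E * E) * (X * E) := by noncomm_ring
          _ = E * C * E * (X * E) := by rw [hE]
          _ = E * C * E * X * E := by noncomm_ring
        rw [h2, Matrix.trace_mul_comm (E * C * E * X) E]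
        have h3 : E * (E * C * E * X) = (E * E) * C * E * X := by noncomm_ring
        rw [h3, hE]
      have haΛ : e * c * e ∈ Λ := by
        rw [hsd]
        intro x hx
        rw [key x]
        exact hT x hx
      refine ⟨e * c * e, haΛ, ?_⟩
      calc e * c * e = (e * e) * c * (e * e) := by rw [hidem]
      _ = e * (e * c * e) * e := by noncomm_ring
  · have : (Finset.univ.filter fun i => ψ e i ≠ 0) = Finset.univ := by
      refine Finset.filter_true_of_mem fun i _ => hcomp i
    rw [this]
end
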